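/- arXiv:math/0303005 — 3 statements merged into one kernel-verified Lean document; each statement's English description precedes it below -/
import Mathlib

section
/- Let L be a lattice, F(L) the set of all filters of L, f(a) = {X ∈ F(L) : a ∈ X}, and define A ∨* B = A ∪ B ∪ {Z ∈ F(L) : ∃ X ∈ A, ∃ Y ∈ B, X ∩ Y ⊆ Z}. Then f(a) ∨* f(b) = f(a ∨ b). -/
def IsLatFilter {L : Type*} [Lattice L] (X : Set L) : Prop :=
  X.Nonempty ∧ (∀ a b : L, a ∈ X → a ≤ b → b ∈ X) ∧ (∀ a b : L, a ∈ X → b ∈ X → a ⊓ b ∈ X)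

def fLat {L : Type*} [Lattice L] (a : L) : Set (Set L) := {X | IsLatFilter X ∧ a ∈ X}

def joinStar {L : Type*} [Lattice L] (A B : Set (Set L)) : Set (Set L) :=
  A ∪ B ∪ {Z | IsLatFilter Z ∧ ∃ X ∈ A, ∃ Y ∈ B, X ∩ Y ⊆ Z}

lemma upFilter {L : Type*} [Lattice L] (a : L) : IsLatFilter {x : L | a ≤ x} :=
  ⟨⟨a, le_refl a⟩, fun x y hx hxy => le_trans hx hxy,
   fun x y hx hy => le_inf hx hy⟩

theorem joinStar_f_eq_f_sup {L : Type*} [Lattice L] (a b : L) :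
    joinStar (fLat a) (fLat b) = fLat (a ⊔ b) := by
  ext Z
  constructor
  · rintro ((⟨hZ, ha⟩ | ⟨hZ, hb⟩) | ⟨hZ, X, ⟨hX, haX⟩, Y, ⟨hY, hbY⟩, hsub⟩)
    · exact ⟨hZ, hZ.2.1 a _ ha le_sup_left⟩
    · exact ⟨hZ, hZ.2.1 b _ hb le_sup_right⟩
    · exact ⟨hZ, hsub ⟨hX.2.1 a _ haX le_sup_left, hY.2.1 b _ hbY le_sup_right⟩⟩
  · rintro ⟨hZ, hab⟩
    right
    refine ⟨hZ, {x | a ≤ x}, ⟨upFilter a, le_refl a⟩, {x | b ≤ x}, ⟨upFilter b, le_refl b⟩, ?_⟩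
    rintro x ⟨hax, hbx⟩
    exact hZ.2.1 _ _ hab (sup_le hax hbx)
end

section
/- Let L be a lattice, P(L) the set of all principal filters of L, and f(a) = {X ∈ P(L) : a ∈ X}. Then f(a) ∨* f(b) = f(a ∨ b), where A ∨* B = A ∪ B ∪ {Z ∈ P(L) : ∃ X ∈ A, ∃ Y ∈ B, X ∩ Y ⊆ Z}. -/
def PrincFilters (L : Type*) [Lattice L] : Set (Set L) := {X | ∃ a : L, X = {b | a ≤ b}}

def fP {L : Type*} [Lattice L] (a : L) : Set (Set L) := {X | X ∈ PrincFilters L ∧ a ∈ X}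

def joinStarP {L : Type*} [Lattice L] (A B : Set (Set L)) : Set (Set L) :=
  A ∪ B ∪ {Z | Z ∈ PrincFilters L ∧ ∃ X ∈ A, ∃ Y ∈ B, X ∩ Y ⊆ Z}

theorem joinStarP_f_eq_f_sup {L : Type*} [Lattice L] (a b : L) :
    joinStarP (fP a) (fP b) = fP (a ⊔ b) := by
  ext Z
  constructor
  · rintro ((⟨⟨c, rfl⟩, hc⟩ | ⟨⟨c, rfl⟩, hc⟩) | ⟨⟨c, rfl⟩, X, ⟨⟨x, rfl⟩, hx⟩, Y, ⟨⟨y, rfl⟩, hy⟩, hsub⟩)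
    · exact ⟨⟨c, rfl⟩, le_trans hc le_sup_left⟩
    · exact ⟨⟨c, rfl⟩, le_trans hc le_sup_right⟩
    · refine ⟨⟨c, rfl⟩, ?_⟩
      have : x ⊔ y ∈ ({b | x ≤ b} : Set L) ∩ {b | y ≤ b} := ⟨le_sup_left, le_sup_right⟩
      exact le_trans (hsub this) (sup_le_sup hx hy)
  · rintro ⟨⟨c, rfl⟩, hc⟩
    refine Or.inr ⟨⟨c, rfl⟩, {x | a ≤ x}, ⟨⟨a, rfl⟩, le_refl a⟩, {x | b ≤ x}, ⟨⟨b, rfl⟩, le_refl b⟩, ?_⟩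
    rintro z ⟨hza, hzb⟩
    exact le_trans hc (sup_le hza hzb)
end

section
/- Let L be a distributive lattice, F(L) the set of all prime filters of L, and f(a) = {X ∈ F(L) : a ∈ X}. Then f(a) ∨* f(b) = f(a) ∪ f(b), where A ∨* B = A ∪ B ∪ {Z ∈ F(L) : ∃ X ∈ A, ∃ Y ∈ B, X ∩ Y ⊆ Z}. -/
def IsPrimeLatFilter {L : Type*} [Lattice L] (Z : Set L) : Prop :=
  IsLatFilter Z ∧ Z ≠ Set.univ ∧ ∀ a b : L, a ⊔ b ∈ Z → a ∈ Z ∨ b ∈ Z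

def fPr {L : Type*} [Lattice L] (a : L) : Set (Set L) := {X | IsPrimeLatFilter X ∧ a ∈ X}

def joinStarPr {L : Type*} [Lattice L] (A B : Set (Set L)) : Set (Set L) :=
  A ∪ B ∪ {Z | IsPrimeLatFilter Z ∧ ∃ X ∈ A, ∃ Y ∈ B, X ∩ Y ⊆ Z}

theorem joinStar_eq_union_of_prime {L : Type*} [DistribLattice L] (a b : L) :
    joinStarPr (fPr a) (fPr b) = fPr a ∪ fPr b := by
  ext Z
  constructor
  · rintro ((h | h) | ⟨hZ, X, ⟨hX, haX⟩, Y, ⟨hY, hbY⟩, hsub⟩)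
    · exact Or.inl h
    · exact Or.inr h
    · have hab : a ⊔ b ∈ Z := by
        apply hsub
        exact ⟨hX.1.2.1 a (a ⊔ b) haX le_sup_left, hY.1.2.1 b (a ⊔ b) hbY le_sup_right⟩
      rcases hZ.2.2 a b hab with h | h
      · exact Or.inl ⟨hZ, h⟩
      · exact Or.inr ⟨hZ, h⟩
  · intro h
    exact Or.inl h
end
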